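/- arXiv:2305.16188 — 3 statements merged into one kernel-verified Lean document; each statement's English description precedes it below -/
import Mathlib

section
/- Let $V_1,\ldots,V_k$ be finite dimensional symplectic vector spaces over $\mathbb{Q}$ and let $L$ be a Lagrangian subspace of $V=\bigoplus_{i=1}^k V_i$. Then there exist Lagrangian subspaces $L_i \subseteq V_i$ such that $L$ is transverse to $\bigoplus_{i=1}^k L_i$, i.e. $L \cap \bigoplus_{i=1}^k L_i = \{0\}$. -/
/-!
The `Lᵢ` are chosen one factor at a time. In a single symplectic space `V` with an isotropic
subspace `N`, take `M` maximal among the isotropic subspaces with `M ⊓ N = ⊥`. Maximality forces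
`Mᗮ ≤ M ⊔ N`; an element of `Mᗮ ⊓ N` is then orthogonal to `M ⊔ N ⊇ Mᗮ`, so it lies in
`Mᗮᗮ ⊓ N = M ⊓ N = 0`, and the modular law gives `Mᗮ = M ⊔ (Mᗮ ⊓ N) = M`: `M` is Lagrangian.

For the sum, `N = L ∩ V₀` is isotropic, so pick a Lagrangian `L₀ ≤ V₀` transverse to it and recurse
on the projection to the other factors of `L ∩ (L₀ ⊕ V₁ ⊕ ⋯)`, which is isotropic because `L₀`
is. An element of `L ∩ ⊕ Lᵢ` then has zero projection, hence lies in `N ∩ L₀ = 0`.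
-/

open Module

theorem Submodule.disjoint_sup_span_singleton {K V : Type*} [Field K] [AddCommGroup V]
    [Module K V] {M N : Submodule K V} (h : Disjoint M N) {v : V} (hv : v ∉ M ⊔ N) :
    Disjoint (M ⊔ K ∙ v) N := by
  have hv0 : v ≠ 0 := fun h0 => hv (h0 ▸ zero_mem _)
  have hvNM : Disjoint (N ⊔ M) (K ∙ v) :=
    (disjoint_span_singleton' hv0).mpr (sup_comm M N ▸ hv)
  exact (h.symm.disjoint_sup_right_of_disjoint_sup_left hvNM).symm

namespace LinearMap.BilinForm

variable {K V : Type*} [Field K] [AddCommGroup V] [Module K V] {B : LinearMap.BilinForm K V}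

def IsIsotropic (B : LinearMap.BilinForm K V) (N : Submodule K V) : Prop :=
  ∀ x ∈ N, ∀ y ∈ N, B x y = 0

theorem isIsotropic_iff_le_orthogonal {N : Submodule K V} :
    B.IsIsotropic N ↔ N ≤ B.orthogonal N :=
  ⟨fun h x hx n hn => h n hn x hx, fun h x hx _ hy => h hy x hx⟩

theorem IsIsotropic.sup_span_singleton (hB : B.IsAlt) {N : Submodule K V} (hN : B.IsIsotropic N)
    {v : V} (hv : v ∈ B.orthogonal N) : B.IsIsotropic (N ⊔ K ∙ v) := by
  intro x hx y hy
  obtain ⟨n, hn, _, hz, rfl⟩ := Submodule.mem_sup.mp hx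
  obtain ⟨n', hn', _, hz', rfl⟩ := Submodule.mem_sup.mp hy
  obtain ⟨c, rfl⟩ := Submodule.mem_span_singleton.mp hz
  obtain ⟨c', rfl⟩ := Submodule.mem_span_singleton.mp hz'
  have hnv : B n v = 0 := hv n hn
  have hvn : B v n' = 0 := hB.isRefl _ _ (hv n' hn')
  simp [hN n hn n' hn', hnv, hvn, hB v]

theorem IsIsotropic.of_orthogonal_eq_self {M : Submodule K V} (h : B.orthogonal M = M) :
    B.IsIsotropic M :=
  isIsotropic_iff_le_orthogonal.mpr h.ge

section FiniteDimensional

variable [FiniteDimensional K V]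

theorem exists_orthogonal_eq_self_disjoint (hB : B.IsAlt) (hnd : B.Nondegenerate)
    {N : Submodule K V} (hN : B.IsIsotropic N) :
    ∃ M : Submodule K V, B.orthogonal M = M ∧ Disjoint M N := by
  obtain ⟨M, ⟨hM, hMN⟩, hmax⟩ :=
    set_has_maximal_iff_noetherian.mpr inferInstance {M | B.IsIsotropic M ∧ Disjoint M N}
      ⟨⊥, fun x hx _ _ => by simp [(Submodule.mem_bot K).mp hx], disjoint_bot_left⟩
  refine ⟨M, ?_, hMN⟩
  have hle : B.orthogonal M ≤ M ⊔ N := by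
    intro v hv
    by_contra hvMN
    have hvM : v ∉ M := fun hvM => hvMN (Submodule.mem_sup_left hvM)
    exact hmax (M ⊔ K ∙ v)
      ⟨hM.sup_span_singleton hB hv, Submodule.disjoint_sup_span_singleton hMN hvMN⟩
      (left_lt_sup.mpr fun h => hvM (h (Submodule.mem_span_singleton_self v)))
  have hdisj : Disjoint (B.orthogonal M) N := by
    rw [Submodule.disjoint_def]
    intro x hxM hxN
    have hx : x ∈ B.orthogonal (B.orthogonal M) := by
      intro y hy
      obtain ⟨m, hm, n, hn, rfl⟩ := Submodule.mem_sup.mp (hle hy)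
      simp [hxM m hm, hN n hn x hxN]
    rw [orthogonal_orthogonal hnd hB.isRefl] at hx
    exact Submodule.disjoint_def.mp hMN x hx hxN
  calc B.orthogonal M = (M ⊔ N) ⊓ B.orthogonal M := (inf_eq_right.mpr hle).symm
    _ = M ⊔ N ⊓ B.orthogonal M := sup_inf_assoc_of_le N (isIsotropic_iff_le_orthogonal.mp hM)
    _ = M := by rw [hdisj.symm.eq_bot, sup_bot_eq]

theorem two_mul_finrank_of_orthogonal_eq_self (hnd : B.Nondegenerate) {M : Submodule K V}
    (h : B.orthogonal M = M) : 2 * finrank K M = finrank K V := by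
  have hM := finrank_orthogonal hnd M
  rw [h] at hM
  have := Submodule.finrank_le M
  omega

end FiniteDimensional

section Pi

variable {ι : Type*} [Fintype ι] {V : ι → Type*} [∀ i, AddCommGroup (V i)] [∀ i, Module K (V i)]

def piForm (B : ∀ i, LinearMap.BilinForm K (V i)) : LinearMap.BilinForm K (∀ i, V i) :=
  ∑ i, (B i).compl₁₂ (LinearMap.proj i) (LinearMap.proj i)

@[simp]
theorem piForm_apply (B : ∀ i, LinearMap.BilinForm K (V i)) (x y : ∀ i, V i) :
    piForm B x y = ∑ i, B i (x i) (y i) := by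
  simp [piForm, LinearMap.sum_apply]

theorem IsIsotropic.comap_single [DecidableEq ι] {B : ∀ i, LinearMap.BilinForm K (V i)}
    {L : Submodule K (∀ i, V i)} (hL : (piForm B).IsIsotropic L) (i : ι) :
    (B i).IsIsotropic (L.comap (LinearMap.single K V i)) := by
  intro x hx y hy
  have hxy := hL _ hx _ hy
  rw [piForm_apply, Fintype.sum_eq_single i fun j hj => by simp [hj]] at hxy
  simpa using hxy

end Pi

section FinSucc

variable {k : ℕ} {V : Fin (k + 1) → Type*} [∀ i, AddCommGroup (V i)] [∀ i, Module K (V i)]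
  {B : ∀ i, LinearMap.BilinForm K (V i)} {L : Submodule K (∀ i, V i)}

theorem IsIsotropic.map_tail (hL : (piForm B).IsIsotropic L) {L₀ : Submodule K (V 0)}
    (hL₀ : (B 0).IsIsotropic L₀) :
    (piForm fun i : Fin k => B i.succ).IsIsotropic
      ((L ⊓ L₀.comap (LinearMap.proj 0)).map (LinearMap.pi fun i => LinearMap.proj i.succ)) := by
  rintro _ ⟨x, ⟨hxL, hx₀⟩, rfl⟩ _ ⟨y, ⟨hyL, hy₀⟩, rfl⟩
  have hxy := hL x hxL y hyL
  rw [piForm_apply, Fin.sum_univ_succ, hL₀ (x 0) hx₀ (y 0) hy₀, zero_add] at hxy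
  simpa using hxy

theorem disjoint_pi_cases {L₀ : Submodule K (V 0)}
    (h₀ : Disjoint L₀ (L.comap (LinearMap.single K V 0)))
    {Li : ∀ i : Fin k, Submodule K (V i.succ)}
    (h : Disjoint ((L ⊓ L₀.comap (LinearMap.proj 0)).map
      (LinearMap.pi fun i => LinearMap.proj i.succ)) (Submodule.pi Set.univ Li)) :
    Disjoint L (Submodule.pi Set.univ (Fin.cases L₀ Li)) := by
  rw [Submodule.disjoint_def]
  intro v hvL hv
  simp only [Submodule.mem_pi, Set.mem_univ, true_implies, Fin.forall_fin_succ, Fin.cases_zero,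
    Fin.cases_succ] at hv
  have htail : ∀ i : Fin k, v i.succ = 0 := by
    have h0 := Submodule.disjoint_def.mp h _ (Submodule.mem_map_of_mem (p := L ⊓ _) ⟨hvL, hv.1⟩)
      (Submodule.mem_pi.mpr fun i _ => hv.2 i)
    intro i
    simpa using _root_.congr_fun h0 i
  have hv_single : v = Pi.single 0 (v 0) := by
    ext j
    cases j using Fin.cases with
    | zero => simp
    | succ i => simp [htail i]
  have hv₀ : v 0 = 0 := Submodule.disjoint_def.mp h₀ _ hv.1 (by simpa [← hv_single] using hvL)
  rw [hv_single, hv₀, Pi.single_zero]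

end FinSucc

theorem exists_pi_orthogonal_eq_self_disjoint {k : ℕ} {V : Fin k → Type*}
    [∀ i, AddCommGroup (V i)] [∀ i, Module K (V i)] [∀ i, FiniteDimensional K (V i)]
    {B : ∀ i, LinearMap.BilinForm K (V i)} (hB : ∀ i, (B i).IsAlt)
    (hnd : ∀ i, (B i).Nondegenerate) {L : Submodule K (∀ i, V i)}
    (hL : (piForm B).IsIsotropic L) :
    ∃ Li : ∀ i, Submodule K (V i),
      (∀ i, (B i).orthogonal (Li i) = Li i) ∧ Disjoint L (Submodule.pi Set.univ Li) := by
  induction k with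
  | zero => exact ⟨finZeroElim, finZeroElim, disjoint_iff.mpr (Subsingleton.elim _ _)⟩
  | succ k ih =>
    obtain ⟨L₀, hL₀, hL₀N⟩ :=
      exists_orthogonal_eq_self_disjoint (hB 0) (hnd 0) (hL.comap_single 0)
    obtain ⟨Li, hLi, hLLi⟩ :=
      ih (fun i => hB i.succ) (fun i => hnd i.succ) (hL.map_tail (.of_orthogonal_eq_self hL₀))
    exact ⟨Fin.cases L₀ Li, Fin.cases hL₀ hLi, disjoint_pi_cases hL₀N hLLi⟩

end LinearMap.BilinForm

theorem stmt0_general {k : ℕ} (V : Fin k → Type) [∀ i, AddCommGroup (V i)]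
    [∀ i, Module ℚ (V i)] [∀ i, FiniteDimensional ℚ (V i)]
    (B : ∀ i, LinearMap.BilinForm ℚ (V i))
    (halt : ∀ i, ∀ x, B i x x = 0) (hnd : ∀ i, (B i).Nondegenerate)
    (L : Submodule ℚ (∀ i, V i))
    (hLiso : ∀ x ∈ L, ∀ y ∈ L, ∑ i, B i (x i) (y i) = 0) :
    ∃ Li : ∀ i, Submodule ℚ (V i),
      (∀ i, (∀ x ∈ Li i, ∀ y ∈ Li i, B i x y = 0) ∧
        2 * Module.finrank ℚ (Li i) = Module.finrank ℚ (V i)) ∧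
      L ⊓ Submodule.pi Set.univ Li = ⊥ := by
  obtain ⟨Li, hLi, hLLi⟩ := LinearMap.BilinForm.exists_pi_orthogonal_eq_self_disjoint halt hnd
    (L := L) fun x hx y hy => by simpa using hLiso x hx y hy
  exact ⟨Li, fun i => ⟨LinearMap.BilinForm.IsIsotropic.of_orthogonal_eq_self (hLi i),
    LinearMap.BilinForm.two_mul_finrank_of_orthogonal_eq_self (hnd i) (hLi i)⟩, hLLi.eq_bot⟩

/-- Let `V 1, …, V k` be finite dimensional symplectic vector spaces over `ℚ` (each `B i` is a
nondegenerate alternating bilinear form) and let `L` be a Lagrangian subspace of the direct sum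
(realized as the Pi type, with the sum symplectic form). Then there exist Lagrangian subspaces
`Li i ⊆ V i` such that `L` is transverse to `⊕ i, Li i`, i.e. their intersection is trivial. -/
theorem stmt0 {k : ℕ} (V : Fin k → Type) [∀ i, AddCommGroup (V i)]
    [∀ i, Module ℚ (V i)] [∀ i, FiniteDimensional ℚ (V i)]
    (B : ∀ i, LinearMap.BilinForm ℚ (V i))
    (halt : ∀ i, ∀ x, B i x x = 0) (hnd : ∀ i, (B i).Nondegenerate)
    (L : Submodule ℚ (∀ i, V i))
    (hLiso : ∀ x ∈ L, ∀ y ∈ L, ∑ i, B i (x i) (y i) = 0)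
    (hLdim : 2 * Module.finrank ℚ L = Module.finrank ℚ (∀ i, V i)) :
    ∃ Li : ∀ i, Submodule ℚ (V i),
      (∀ i, (∀ x ∈ Li i, ∀ y ∈ Li i, B i x y = 0) ∧
        2 * Module.finrank ℚ (Li i) = Module.finrank ℚ (V i)) ∧
      L ⊓ Submodule.pi Set.univ Li = ⊥ :=
  stmt0_general V B halt hnd L hLiso
end

section
/- Let $A_{4_1}(\mu,\lambda) = -\lambda + \lambda\mu^2 + \mu^4 + 2\lambda\mu^4 + \lambda^2\mu^4 + \lambda\mu^6 - \lambda\mu^8$ be the A-polynomial of the figure-eight knot. For every integer $q$, the only non-simple root of the Laurent polynomial $A_{4_1}(x^{-q}, x)$ in $x$ is $x = -1$, which is a double root. -/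
/-!
Write `v = x^(-2q)`, `s = v + v⁻¹`, `t = x + x⁻¹`. For `x ≠ 0` one has
`f x = x v² (t - (s² - s - 4))`, and the Euler operator `x d/dx` sends `t` to `x - x⁻¹` and
`s` to `-2q (v - v⁻¹)`, so at a multiple root `t = s² - s - 4` and
`x - x⁻¹ = -2q (2s - 1) (v - v⁻¹)`. Since `(y + y⁻¹)² - (y - y⁻¹)² = 4` for `y = x, v`,
everything but `s` can be eliminated: `(s² - 4) ((s - 3)(s + 1) - 4q² (2s - 1)²) = 0`.
If `s = ±2` then `t = ∓2`, so `x = ∓1`, and `x = 1` is impossible since it gives `v = 1`.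
Otherwise `q ≠ 0` and the quadratic forces `‖s‖ ≤ 4/3` and `‖t‖ ≥ 4`; then `‖x‖` or `‖x⁻¹‖`
is at least `3`, hence so is `‖v‖` or `‖v⁻¹‖`, and `‖s‖ ≥ 8/3`. At `x = -1`, where `v = 1`,
the same formulas give `f(-1) = f'(-1) = 0` and `f''(-1) = 24q² + 2`.
-/

open Topology

section ZPowSum

variable {𝕜 ι : Type*} [NontriviallyNormedField 𝕜] [Fintype ι]

def zpowSum (c : ι → 𝕜) (e : ι → ℤ) (x : 𝕜) : 𝕜 := ∑ i, c i * x ^ e i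

variable {c : ι → 𝕜} {e : ι → ℤ} {x : 𝕜}

lemma hasDerivAt_zpowSum (hx : x ≠ 0) :
    HasDerivAt (zpowSum c e) (zpowSum (fun i => c i * e i) (fun i => e i - 1) x) x := by
  unfold zpowSum
  refine HasDerivAt.fun_sum fun i _ => ?_
  simpa [mul_assoc] using (hasDerivAt_zpow (e i) x (.inl hx)).const_mul (c i)

lemma deriv_zpowSum (hx : x ≠ 0) :
    deriv (zpowSum c e) x = zpowSum (fun i => c i * e i) (fun i => e i - 1) x :=
  (hasDerivAt_zpowSum hx).deriv

lemma iteratedDeriv_two_zpowSum (hx : x ≠ 0) :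
    iteratedDeriv 2 (zpowSum c e) x =
      zpowSum (fun i => c i * e i * (e i - 1)) (fun i => e i - 2) x := by
  have hderiv : deriv (zpowSum c e) =ᶠ[𝓝 x] zpowSum (fun i => c i * e i) (fun i => e i - 1) :=
    eventually_ne_nhds hx |>.mono fun y hy => deriv_zpowSum hy
  rw [iteratedDeriv_succ, iteratedDeriv_one, hderiv.deriv_eq, deriv_zpowSum hx]
  simp only [zpowSum, Int.cast_sub, Int.cast_one, sub_sub]
  norm_num

lemma pow_mul_zpowSum_sub (k : ℕ) (hx : x ≠ 0) :
    x ^ k * zpowSum c (fun i => e i - k) x = zpowSum c e x := by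
  simp only [zpowSum, Finset.mul_sum]
  refine Finset.sum_congr rfl fun i _ => ?_
  rw [zpow_sub₀ hx, zpow_natCast]
  field_simp

lemma zpowSum_add_mul (a b : ι → ℕ) (m : ℤ) (hx : x ≠ 0) :
    zpowSum c (fun i => a i + m * b i) x = ∑ i, c i * x ^ a i * (x ^ m) ^ b i := by
  simp only [zpowSum, zpow_add₀ hx, zpow_mul, zpow_natCast, mul_assoc]

lemma mul_deriv_zpowSum (hx : x ≠ 0) :
    x * deriv (zpowSum c e) x = zpowSum (fun i => c i * e i) e x := by
  rw [deriv_zpowSum hx]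
  simpa using pow_mul_zpowSum_sub (c := fun i => c i * e i) 1 hx

lemma sq_mul_iteratedDeriv_two_zpowSum (hx : x ≠ 0) :
    x ^ 2 * iteratedDeriv 2 (zpowSum c e) x = zpowSum (fun i => c i * e i * (e i - 1)) e x := by
  rw [iteratedDeriv_two_zpowSum hx]
  exact_mod_cast pow_mul_zpowSum_sub 2 hx

end ZPowSum

lemma add_inv_sq_sub_sub_inv_sq {K : Type*} [Field K] {x : K} (hx : x ≠ 0) :
    (x + x⁻¹) ^ 2 - (x - x⁻¹) ^ 2 = 4 := by
  field_simp; ring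

lemma eq_of_add_inv_eq_two_mul {K : Type*} [Field K] {x c : K} (hx : x ≠ 0) (hc : c ^ 2 = 1)
    (h : x + x⁻¹ = 2 * c) : x = c := by
  have : (x - c) ^ 2 = 0 := by
    field_simp at h
    linear_combination h + hc
  exact sub_eq_zero.1 (pow_eq_zero_iff two_ne_zero |>.1 this)

section Norm
variable {K : Type*} [NormedField K] {x : K}

lemma three_le_norm_or_of_four_le_norm_add_inv (h : 4 ≤ ‖x + x⁻¹‖) : 3 ≤ ‖x‖ ∨ 3 ≤ ‖x⁻¹‖ := by
  by_contra! hlt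
  have hx : x ≠ 0 := by rintro rfl; norm_num at h
  have hmul : ‖x‖ * ‖x⁻¹‖ = 1 := by rw [← norm_mul, mul_inv_cancel₀ hx, norm_one]
  nlinarith [norm_add_le x x⁻¹, mul_pos (sub_pos.2 hlt.1) (sub_pos.2 hlt.2)]

lemma le_norm_zpow_or {c : ℝ} {n : ℤ} (hc : 1 ≤ c) (hn : n ≠ 0) (h : c ≤ ‖x‖ ∨ c ≤ ‖x⁻¹‖) :
    c ≤ ‖x ^ n‖ ∨ c ≤ ‖(x ^ n)⁻¹‖ := by
  have hpow : ∀ y : K, c ≤ ‖y‖ → ∀ m : ℤ, 0 < m → c ≤ ‖y ^ m‖ := fun y hy m hm => by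
    rw [norm_zpow]
    exact hy.trans (by simpa using zpow_le_zpow_right₀ (hc.trans hy) (show (1 : ℤ) ≤ m by omega))
  rcases hn.lt_or_gt with hn | hn
  · rw [← zpow_neg, show x ^ n = x⁻¹ ^ (-n) by rw [inv_zpow', neg_neg]]
    exact h.symm.imp (hpow _ · _ (by omega)) (hpow _ · _ (by omega))
  · rw [← inv_zpow]
    exact h.imp (hpow _ · _ hn) (hpow _ · _ hn)

lemma eight_thirds_le_norm_add_inv (h : 3 ≤ ‖x‖ ∨ 3 ≤ ‖x⁻¹‖) : 8 / 3 ≤ ‖x + x⁻¹‖ := by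
  have hx : x ≠ 0 := by rintro rfl; norm_num at h
  have hmul : ‖x‖ * ‖x⁻¹‖ = 1 := by rw [← norm_mul, mul_inv_cancel₀ hx, norm_one]
  have h1 := norm_sub_norm_le x (-x⁻¹)
  have h2 := norm_sub_norm_le x⁻¹ (-x)
  simp only [norm_neg, sub_neg_eq_add] at h1 h2
  rw [add_comm] at h2
  rcases h with h | h <;> nlinarith [norm_nonneg x, norm_nonneg x⁻¹]

end Norm

lemma norm_le_of_quadratic {k : ℝ} {s : ℂ} (hk : 4 ≤ k)
    (h : (s - 3) * (s + 1) = k * (2 * s - 1) ^ 2) : ‖s‖ ≤ 4 / 3 := by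
  have hquad : ((4 * k - 1 : ℝ) : ℂ) * s ^ 2 = ((4 * k - 2 : ℝ) : ℂ) * s - ((k + 3 : ℝ) : ℂ) := by
    push_cast; linear_combination -h
  have hnorm := congrArg norm hquad
  have htri := norm_sub_le (((4 * k - 2 : ℝ) : ℂ) * s) ((k + 3 : ℝ) : ℂ)
  rw [← hnorm] at htri
  simp only [norm_mul, norm_pow, Complex.norm_of_nonneg (show (0:ℝ) ≤ 4 * k - 1 by linarith),
    Complex.norm_of_nonneg (show (0:ℝ) ≤ 4 * k - 2 by linarith),
    Complex.norm_of_nonneg (show (0:ℝ) ≤ k + 3 by linarith)] at htri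
  by_contra! hs
  have hgrowth : 0 < (4 * k - 1) * (‖s‖ + 4 / 3) - (4 * k - 2) := by nlinarith
  nlinarith [mul_pos (sub_pos.2 hs) hgrowth]

lemma four_le_norm_of_quadratic {k : ℝ} {s t : ℂ} (hk : 4 ≤ k)
    (h : (s - 3) * (s + 1) = k * (2 * s - 1) ^ 2) (ht : t = s ^ 2 - s - 4) : 4 ≤ ‖t‖ := by
  have hs := norm_le_of_quadratic hk h
  have hlin : ((4 * k - 1 : ℝ) : ℂ) * t = -(s + ((17 * k - 1 : ℝ) : ℂ)) := by
    subst ht; push_cast; linear_combination -h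
  have htri := norm_sub_le (s + ((17 * k - 1 : ℝ) : ℂ)) s
  rw [add_sub_cancel_left, ← norm_neg (s + _), ← hlin, norm_mul,
    Complex.norm_of_nonneg (show (0:ℝ) ≤ 17 * k - 1 by linarith),
    Complex.norm_of_nonneg (show (0:ℝ) ≤ 4 * k - 1 by linarith)] at htri
  nlinarith

noncomputable def figureEight (q : ℤ) (x : ℂ) : ℂ :=
  -x + x ^ (1 - 2*q) + x ^ (-(4*q)) + 2 * x ^ (1 - 4*q) + x ^ (2 - 4*q)
    + x ^ (1 - 6*q) - x ^ (1 - 8*q)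

namespace figureEight

/-- `A_{4_1}(μ, λ) = ∑ i, coeff i * λ ^ xDeg i * (μ ^ 2) ^ vDeg i`, so along `(μ, λ) = (x^{-q}, x)`
the `i`-th monomial is `coeff i * x ^ exponent q i`. -/
def coeff : Fin 7 → ℂ := ![-1, 1, 1, 2, 1, 1, -1]
def xDeg : Fin 7 → ℕ := ![1, 1, 0, 1, 2, 1, 1]
def vDeg : Fin 7 → ℕ := ![0, 1, 2, 2, 2, 3, 4]
def exponent (q : ℤ) : Fin 7 → ℤ := fun i => xDeg i + -(2 * q) * vDeg i

lemma eq_zpowSum (q : ℤ) : figureEight q = zpowSum coeff (exponent q) := by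
  funext x
  simp only [figureEight, zpowSum, Fin.sum_univ_seven, coeff, exponent, xDeg, vDeg, Matrix.cons_val,
    Nat.cast_zero, Nat.cast_one, Nat.cast_ofNat, mul_zero, add_zero, zpow_one]
  ring_nf

lemma resultant_eq_zero {R : Type*} [CommRing R] {q s t u w : R}
    (ht : t = s ^ 2 - s - 4) (hu : u = -(2 * q * (2 * s - 1) * w))
    (htu : t ^ 2 - u ^ 2 = 4) (hsw : s ^ 2 - w ^ 2 = 4) :
    (s ^ 2 - 4) * ((s - 3) * (s + 1) - 4 * q ^ 2 * (2 * s - 1) ^ 2) = 0 := by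
  subst ht hu
  linear_combination htu - 4 * q ^ 2 * (2 * s - 1) ^ 2 * hsw

variable {q : ℤ} {x v : ℂ}

lemma zpowSum_exponent (d : Fin 7 → ℂ) (hx : x ≠ 0) (hv : v = x ^ (-(2 * q))) :
    zpowSum d (exponent q) x = d 0 * x + d 1 * x * v + d 2 * v ^ 2 + d 3 * x * v ^ 2
      + d 4 * x ^ 2 * v ^ 2 + d 5 * x * v ^ 3 + d 6 * x * v ^ 4 := by
  unfold exponent
  rw [zpowSum_add_mul _ _ _ hx, ← hv, Fin.sum_univ_seven]
  simp only [xDeg, vDeg, Matrix.cons_val]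
  ring

lemma apply_of_ne_zero (hx : x ≠ 0) (hv : v = x ^ (-(2 * q))) :
    figureEight q x = x * v ^ 2 * (x + x⁻¹ - ((v + v⁻¹) ^ 2 - (v + v⁻¹) - 4)) := by
  have hv0 : v ≠ 0 := hv ▸ zpow_ne_zero _ hx
  rw [eq_zpowSum, zpowSum_exponent _ hx hv]
  simp only [coeff, Matrix.cons_val]
  field_simp
  ring

lemma mul_deriv_of_ne_zero (hx : x ≠ 0) (hv : v = x ^ (-(2 * q))) :
    x * deriv (figureEight q) x =
      x * v ^ 2 * ((1 - 4 * q) * (x + x⁻¹ - ((v + v⁻¹) ^ 2 - (v + v⁻¹) - 4))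
        + (x - x⁻¹) + 2 * q * (2 * (v + v⁻¹) - 1) * (v - v⁻¹)) := by
  have hv0 : v ≠ 0 := hv ▸ zpow_ne_zero _ hx
  rw [eq_zpowSum, mul_deriv_zpowSum hx, zpowSum_exponent _ hx hv]
  simp only [coeff, exponent, xDeg, vDeg, Matrix.cons_val]
  push_cast
  field_simp
  ring

lemma neg_one_zpow_two_mul (q : ℤ) : (-1 : ℂ) ^ (-(2 * q)) = 1 := by
  rw [zpow_neg, zpow_mul]; norm_num

lemma apply_neg_one : figureEight q (-1) = 0 := by
  rw [apply_of_ne_zero (by norm_num) (neg_one_zpow_two_mul q).symm]; norm_num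

lemma deriv_neg_one : deriv (figureEight q) (-1) = 0 := by
  have h := mul_deriv_of_ne_zero (q := q) (x := -1) (by norm_num) (neg_one_zpow_two_mul q).symm
  norm_num at h
  exact h

lemma iteratedDeriv_two_neg_one : iteratedDeriv 2 (figureEight q) (-1) = 24 * q ^ 2 + 2 := by
  have h :=
    sq_mul_iteratedDeriv_two_zpowSum (c := coeff) (e := exponent q) (x := -1) (by norm_num)
  rw [zpowSum_exponent _ (by norm_num) (neg_one_zpow_two_mul q).symm, ← eq_zpowSum] at h
  simp only [coeff, exponent, xDeg, vDeg, Matrix.cons_val] at h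
  push_cast at h
  linear_combination h

lemma quadratic_ne_zero (hq : q ≠ 0) {s : ℂ} (hs : s = x ^ (-(2 * q)) + (x ^ (-(2 * q)))⁻¹)
    (ht : x + x⁻¹ = s ^ 2 - s - 4) : (s - 3) * (s + 1) - 4 * q ^ 2 * (2 * s - 1) ^ 2 ≠ 0 := by
  intro h
  have hk : (4 : ℝ) ≤ 4 * q ^ 2 := by
    have : (1 : ℤ) ≤ q ^ 2 := by rcases hq.lt_or_gt with h | h <;> nlinarith
    have : (1 : ℝ) ≤ q ^ 2 := by exact_mod_cast this
    linarith
  have hquad : (s - 3) * (s + 1) = ((4 * q ^ 2 : ℝ) : ℂ) * (2 * s - 1) ^ 2 := by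
    push_cast; linear_combination h
  have hfar := le_norm_zpow_or (by norm_num) (by omega : -(2 * q) ≠ 0)
    (three_le_norm_or_of_four_le_norm_add_inv (four_le_norm_of_quadratic hk hquad ht))
  have := eight_thirds_le_norm_add_inv hfar
  rw [← hs] at this
  linarith [norm_le_of_quadratic hk hquad]

theorem eq_neg_one_of_deriv_eq_zero (hx : x ≠ 0) (h0 : figureEight q x = 0)
    (h1 : deriv (figureEight q) x = 0) : x = -1 := by
  set v := x ^ (-(2 * q)) with hv
  have hv0 : v ≠ 0 := zpow_ne_zero _ hx
  have hxv : x * v ^ 2 ≠ 0 := mul_ne_zero hx (pow_ne_zero 2 hv0)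
  set s := v + v⁻¹ with hs
  have ht : x + x⁻¹ = s ^ 2 - s - 4 := by
    rw [apply_of_ne_zero hx hv] at h0
    linear_combination (mul_eq_zero.1 h0).resolve_left hxv
  have hu : x - x⁻¹ = -(2 * q * (2 * s - 1) * (v - v⁻¹)) := by
    have h := mul_deriv_of_ne_zero hx hv
    rw [h1, mul_zero, ht, sub_self, mul_zero, zero_add] at h
    linear_combination (mul_eq_zero.1 h.symm).resolve_left hxv
  rcases mul_eq_zero.1 (resultant_eq_zero ht hu (add_inv_sq_sub_sub_inv_sq hx)
    (add_inv_sq_sub_sub_inv_sq hv0)) with hs2 | hquad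
  · have : (s - 2) * (s + 2) = 0 := by linear_combination hs2
    rcases mul_eq_zero.1 this with h2 | h2
    · exact eq_of_add_inv_eq_two_mul hx (by norm_num)
        (by rw [ht]; linear_combination (s + 1) * h2)
    · have hx1 : x = 1 := eq_of_add_inv_eq_two_mul hx (by norm_num)
        (by rw [ht]; linear_combination (s - 3) * h2)
      subst hx1
      norm_num [hs, hv] at h2
  · exfalso
    rcases eq_or_ne q 0 with rfl | hq
    · norm_num [hs, hv] at hquad
    · exact quadratic_ne_zero hq hs ht hquad

end figureEight

/-- Let `f(x) = A_{4_1}(x^{-q}, x)` be the A-polynomial of the figure-eight knot evaluated along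
the curve `(x^{-q}, x)`, i.e.
`f(x) = -x + x^{1-2q} + x^{-4q} + 2x^{1-4q} + x^{2-4q} + x^{1-6q} - x^{1-8q}`.
For every integer `q`, the only non-simple root of `f` on `ℂ*` is `x = -1`, which is a double
root: any root `x ≠ 0, -1` is simple (nonvanishing derivative), while `f(-1) = 0`,
`f'(-1) = 0` and `f''(-1) ≠ 0`. -/
theorem stmt3 (q : ℤ) (f : ℂ → ℂ)
    (hf : f = fun x : ℂ =>
      -x + x ^ (1 - 2*q) + x ^ (-(4*q)) + 2 * x ^ (1 - 4*q) + x ^ (2 - 4*q)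
        + x ^ (1 - 6*q) - x ^ (1 - 8*q)) :
    (∀ x : ℂ, x ≠ 0 → x ≠ -1 → f x = 0 → deriv f x ≠ 0) ∧
    f (-1) = 0 ∧ deriv f (-1) = 0 ∧ iteratedDeriv 2 f (-1) ≠ 0 := by
  obtain rfl : f = figureEight q := hf
  refine ⟨fun x hx hx1 h0 h1 => hx1 (figureEight.eq_neg_one_of_deriv_eq_zero hx h0 h1),
    figureEight.apply_neg_one, figureEight.deriv_neg_one, ?_⟩
  rw [figureEight.iteratedDeriv_two_neg_one]
  exact_mod_cast (show (24 * q ^ 2 + 2 : ℤ) ≠ 0 by positivity)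
end

section
/- Let $\mu \in \mathbb{C}^*$, $\tau \in \mathbb{C}$, and set $M_a = \begin{pmatrix} \mu & 1 \\ 0 & \mu^{-1} \end{pmatrix}$, $M_b = \begin{pmatrix} \mu & 0 \\ \tau & \mu^{-1} \end{pmatrix}$, and $W = M_b^{-1} M_a M_b M_a^{-1}$. Then $M_a W = W M_b$ holds if and only if $\tau^2 + (3 - \mu^2 - \mu^{-2})(1 - \tau) = 0$. -/
/-- Let `μ ∈ ℂ*`, `τ ∈ ℂ`, and set `Ma = !![μ, 1; 0, μ⁻¹]`, `Mb = !![μ, 0; τ, μ⁻¹]` and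
`W = Mb⁻¹ * Ma * Mb * Ma⁻¹`. Then `Ma * W = W * Mb` holds if and only if
`τ² + (3 - μ² - μ⁻²)(1 - τ) = 0`. -/
theorem stmt9 (μ : ℂ) (hμ : μ ≠ 0) (τ : ℂ)
    (Ma Mb W : Matrix (Fin 2) (Fin 2) ℂ)
    (hMa : Ma = !![μ, 1; 0, μ⁻¹]) (hMb : Mb = !![μ, 0; τ, μ⁻¹])
    (hW : W = Mb⁻¹ * Ma * Mb * Ma⁻¹) :
    Ma * W = W * Mb ↔ τ ^ 2 + (3 - μ ^ 2 - μ⁻¹ ^ 2) * (1 - τ) = 0 := by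
  have hMai : Ma⁻¹ = !![μ⁻¹, -1; 0, μ] := by
    apply Matrix.inv_eq_left_inv
    ext i j
    rw [hMa]
    fin_cases i <;> fin_cases j <;>
      simp [Matrix.mul_apply, Fin.sum_univ_two] <;> field_simp
  have hMbi : Mb⁻¹ = !![μ⁻¹, 0; -τ, μ] := by
    apply Matrix.inv_eq_left_inv
    ext i j
    rw [hMb]
    fin_cases i <;> fin_cases j <;>
        simp [Matrix.mul_apply, Fin.sum_univ_two]
    all_goals (try field_simp)
    all_goals ring
  subst hW hMa hMb
  rw [hMai, hMbi]
  constructor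
  · intro h
    have h01 := Matrix.ext_iff.2 h 0 1
    simp [Matrix.mul_apply, Fin.sum_univ_two] at h01
    field_simp at h01 ⊢
    ring_nf at h01 ⊢
    linear_combination h01
  · intro h
    field_simp at h
    ext i j
    fin_cases i <;> fin_cases j <;>
        simp [Matrix.mul_apply, Fin.sum_univ_two]
    all_goals (try field_simp)
    all_goals (try ring_nf)
    · linear_combination h
    · linear_combination -τ * h
end
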